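/- Let n ≥ 1, p ≥ 1, let X_i ∈ ℝ^p with coordinate sum S_i = Σ_{j=1}^p X_{ij} for i = 1,…,n+1, and let Y_1,…,Y_n ∈ ℝ. Set c_i = Y_i + (S_{n+1} − S_i) and d_i = Y_i² + (S_{n+1} − S_i) for i = 1,…,n, and let η ∈ ℝ satisfy η ≥ max_{1 ≤ i ≤ n} 2(√(max(0, c_i² − d_i)) − c_i). For a provisional value y ∈ ℝ set Y_{n+1} = y and define μ_i(y) = Y_i² − [S_i + η Σ_{j ≠ i} (Y_j − S_j)] for i = 1,…,n+1 (with Y_{n+1}² in place of Y_i² for i = n+1). Put s_i = √(η²/4 + η c_i + d_i), a_i = −η/2 − s_i, and b_i = −η/2 + s_i for i = 1,…,n. Then for every α ∈ (0,1) with (n+1)α not an integer and r := ⌊(n+1)α⌋ satisfying 1 ≤ r ≤ n, the conformal prediction region {y ∈ ℝ : #{i ∈ {1,…,n+1} : μ_i(y) ≥ μ_{n+1}(y)} > (n+1)α} equals the bounded interval {y ∈ ℝ : a_{(r)} ≤ y ≤ b_{(n+1−r)}}, where a_{(k)} and b_{(k)} denote the k-th smallest values among a_1,…,a_n and b_1,…,b_n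 respectively. -/
import Mathlib


lemma count_ge_iff_sorted {m : ℕ} (f : Fin m → ℝ) (t : ℝ) (r : ℕ) (hr : 1 ≤ r) (hrm : r ≤ m) :
    r ≤ (Finset.univ.filter fun k => t ≤ f k).card ↔
      t ≤ (f ∘ Tuple.sort f) ⟨m - r, by omega⟩ := by
  have hmono := Tuple.monotone_sort f
  have hcard : (Finset.univ.filter fun k => t ≤ f k).card
      = (Finset.univ.filter fun k => t ≤ (f ∘ Tuple.sort f) k).card := by
    apply Finset.card_equiv (Tuple.sort f).symm
    intro i
    simp [Equiv.apply_symm_apply]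
  rw [hcard]
  constructor
  · intro h
    by_contra hlt
    push_neg at hlt
    have hsub : (Finset.univ.filter fun k => t ≤ (f ∘ Tuple.sort f) k)
        ⊆ Finset.Ioi (⟨m - r, by omega⟩ : Fin m) := by
      intro k hk
      simp only [Finset.mem_filter, Finset.mem_univ, true_and] at hk
      rw [Finset.mem_Ioi]
      by_contra hle
      push_neg at hle
      exact absurd (le_trans hk (hmono hle)) (not_le.mpr hlt)
    have := Finset.card_le_card hsub
    rw [Fin.card_Ioi] at this
    simp only at this
    omega
  · intro h
    have hsub : Finset.Ici (⟨m - r, by omega⟩ : Fin m)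
        ⊆ (Finset.univ.filter fun k => t ≤ (f ∘ Tuple.sort f) k) := by
      intro k hk
      rw [Finset.mem_Ici] at hk
      simp only [Finset.mem_filter, Finset.mem_univ, true_and]
      exact le_trans h (hmono hk)
    have := Finset.card_le_card hsub
    rw [Fin.card_Ici] at this
    simp only at this
    omega

lemma count_le_iff_sorted {m : ℕ} (f : Fin m → ℝ) (t : ℝ) (r : ℕ) (hr : 1 ≤ r) (hrm : r ≤ m) :
    r ≤ (Finset.univ.filter fun k => f k ≤ t).card ↔
      (f ∘ Tuple.sort f) ⟨r - 1, by omega⟩ ≤ t := by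
  have hmono := Tuple.monotone_sort f
  have hcard : (Finset.univ.filter fun k => f k ≤ t).card
      = (Finset.univ.filter fun k => (f ∘ Tuple.sort f) k ≤ t).card := by
    apply Finset.card_equiv (Tuple.sort f).symm
    intro i
    simp [Equiv.apply_symm_apply]
  rw [hcard]
  constructor
  · intro h
    by_contra hlt
    push_neg at hlt
    have hsub : (Finset.univ.filter fun k => (f ∘ Tuple.sort f) k ≤ t)
        ⊆ Finset.Iio (⟨r - 1, by omega⟩ : Fin m) := by
      intro k hk
      simp only [Finset.mem_filter, Finset.mem_univ, true_and] at hk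
      rw [Finset.mem_Iio]
      by_contra hle
      push_neg at hle
      exact absurd (le_trans (hmono hle) hk) (not_le.mpr hlt)
    have := Finset.card_le_card hsub
    rw [Fin.card_Iio] at this
    simp only at this
    omega
  · intro h
    have hsub : Finset.Iic (⟨r - 1, by omega⟩ : Fin m)
        ⊆ (Finset.univ.filter fun k => (f ∘ Tuple.sort f) k ≤ t) := by
      intro k hk
      rw [Finset.mem_Iic] at hk
      simp only [Finset.mem_filter, Finset.mem_univ, true_and]
      exact le_trans (hmono hk) h
    have := Finset.card_le_card hsub
    rw [Fin.card_Iic] at this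
    simp only at this
    omega

/-- Theorem 5 of the paper (with corrected order-statistic indices): for the
non-conformity measure (10) with `β₂ = 1, β₁ = 0, γ = −1` and `η` large enough,
the conformal prediction region `{y : #{i : μ_i(y) ≥ μ_{n+1}(y)} > (n+1)α}` is
the bounded interval `[a_{(r)}, b_{(n+1−r)}]`, where `a_i = −η/2 − s_i`,
`b_i = −η/2 + s_i`, `s_i = √(η²/4 + η c_i + d_i)`, and `r = ⌊(n+1)α⌋`. -/
theorem stmt_15
    (n p : ℕ) (hn : 1 ≤ n) (hp : 1 ≤ p)
    (X : Fin (n + 1) → Fin p → ℝ) (Y : Fin n → ℝ)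
    (S : Fin (n + 1) → ℝ) (hS : ∀ i, S i = ∑ j, X i j)
    (c d : Fin n → ℝ)
    (hc : ∀ i : Fin n, c i = Y i + (S (Fin.last n) - S i.castSucc))
    (hd : ∀ i : Fin n, d i = (Y i) ^ 2 + (S (Fin.last n) - S i.castSucc))
    (η : ℝ)
    (hη : ∀ i : Fin n, 2 * (Real.sqrt (max 0 ((c i) ^ 2 - d i)) - c i) ≤ η)
    (μ : ℝ → Fin (n + 1) → ℝ)
    (hμ : ∀ (y : ℝ) (i : Fin (n + 1)),
      μ y i = ((Fin.snoc Y y : Fin (n + 1) → ℝ) i) ^ 2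
        - (S i + η * ∑ j ∈ Finset.univ.erase i,
            ((Fin.snoc Y y : Fin (n + 1) → ℝ) j - S j)))
    (s a b : Fin n → ℝ)
    (hs : ∀ i : Fin n, s i = Real.sqrt (η ^ 2 / 4 + η * c i + d i))
    (ha : ∀ i : Fin n, a i = -η / 2 - s i)
    (hb : ∀ i : Fin n, b i = -η / 2 + s i) :
    ∀ (α : ℝ) (_ : α ∈ Set.Ioo (0 : ℝ) 1)
      (_ : ∀ k : ℤ, ((n : ℝ) + 1) * α ≠ (k : ℝ))
      (r : ℕ) (_ : (r : ℤ) = ⌊((n : ℝ) + 1) * α⌋) (_ : 1 ≤ r) (_ : r ≤ n),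
      {y : ℝ | ((n : ℝ) + 1) * α <
          ((Finset.univ.filter
            (fun i : Fin (n + 1) => μ y (Fin.last n) ≤ μ y i)).card : ℝ)}
        = Set.Icc ((a ∘ Tuple.sort a) ⟨r - 1, by omega⟩)
            ((b ∘ Tuple.sort b) ⟨n - r, by omega⟩) := by
  intro α hα hne r hrfloor hr1 hrn
  -- basic facts about s
  have hq : ∀ k : Fin n, 0 ≤ η ^ 2 / 4 + η * c k + d k := by
    intro k
    have h1 : Real.sqrt (max 0 ((c k) ^ 2 - d k)) ^ 2 = max 0 ((c k) ^ 2 - d k) :=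
      Real.sq_sqrt (le_max_left _ _)
    have h2 := le_max_right (0 : ℝ) ((c k) ^ 2 - d k)
    have h3 := Real.sqrt_nonneg (max 0 ((c k) ^ 2 - d k))
    nlinarith [hη k]
  have hsq : ∀ k : Fin n, s k ^ 2 = η ^ 2 / 4 + η * c k + d k := by
    intro k; rw [hs]; exact Real.sq_sqrt (hq k)
  have hs0 : ∀ k : Fin n, 0 ≤ s k := by intro k; rw [hs]; exact Real.sqrt_nonneg _
  -- key pointwise equivalence
  have key : ∀ (y : ℝ) (k : Fin n),
      (μ y (Fin.last n) ≤ μ y k.castSucc) ↔ (a k ≤ y ∧ y ≤ b k) := by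
    intro y k
    have hTL := hμ y (Fin.last n)
    have hTk := hμ y k.castSucc
    rw [Finset.sum_erase_eq_sub (Finset.mem_univ _)] at hTL hTk
    simp only [Fin.snoc_last, Fin.snoc_castSucc] at hTL hTk
    rw [hTL, hTk]
    have hck' : η * c k = η * (Y k) + η * (S (Fin.last n) - S k.castSucc) := by
      rw [hc k]; ring
    have hsqk := hsq k
    have hdk := hd k
    have hs0k := hs0 k
    constructor
    · intro h
      have h2 : (y + η / 2) ^ 2 ≤ s k ^ 2 := by nlinarith [hsqk, hdk, hck']
      constructor
      · rw [ha k]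
        nlinarith [h2, hs0k, sq_nonneg (y + η / 2 + s k), sq_nonneg (y + η / 2 - s k)]
      · rw [hb k]
        nlinarith [h2, hs0k, sq_nonneg (y + η / 2 + s k), sq_nonneg (y + η / 2 - s k)]
    · rintro ⟨h1, h2⟩
      rw [ha k] at h1
      rw [hb k] at h2
      nlinarith [hsqk, hdk, hck',
        mul_nonneg (by linarith : (0:ℝ) ≤ s k - (y + η / 2))
          (by linarith : (0:ℝ) ≤ s k + (y + η / 2))]
  -- card decomposition
  have hcard : ∀ y : ℝ,
      (Finset.univ.filter (fun i : Fin (n + 1) => μ y (Fin.last n) ≤ μ y i)).card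
        = 1 + (Finset.univ.filter (fun k : Fin n => a k ≤ y ∧ y ≤ b k)).card := by
    intro y
    rw [Fin.univ_castSuccEmb, Finset.filter_cons, if_pos (le_refl _), Finset.card_cons,
      Finset.filter_map, Finset.card_map]
    have hfe : (Finset.filter ((fun i => μ y (Fin.last n) ≤ μ y i) ∘ ⇑Fin.castSuccEmb) Finset.univ)
        = Finset.filter (fun k : Fin n => a k ≤ y ∧ y ≤ b k) Finset.univ := by
      apply Finset.filter_congr
      intro k _
      simpa using key y k
    rw [hfe, add_comm]
  -- floor facts
  have hxlt : (r : ℝ) < ((n : ℝ) + 1) * α := by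
    have h1 : ((⌊((n : ℝ) + 1) * α⌋ : ℤ) : ℝ) ≤ ((n : ℝ) + 1) * α := Int.floor_le _
    rw [← hrfloor] at h1
    push_cast at h1
    rcases lt_or_eq_of_le h1 with h | h
    · exact h
    · exact absurd h.symm (by simpa using hne (r : ℤ))
  have hxlt2 : ((n : ℝ) + 1) * α < (r : ℝ) + 1 := by
    have h1 : ((n : ℝ) + 1) * α < ((⌊((n : ℝ) + 1) * α⌋ : ℤ) : ℝ) + 1 := Int.lt_floor_add_one _
    rw [← hrfloor] at h1
    push_cast at h1
    exact h1
  -- main pointwise characterization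
  ext y
  simp only [Set.mem_setOf_eq, Set.mem_Icc]
  rw [hcard y]
  have hsplit : (((n : ℝ) + 1) * α <
        ((1 + (Finset.univ.filter (fun k : Fin n => a k ≤ y ∧ y ≤ b k)).card : ℕ) : ℝ))
      ↔ r ≤ (Finset.univ.filter (fun k : Fin n => a k ≤ y ∧ y ≤ b k)).card := by
    set m := (Finset.univ.filter (fun k : Fin n => a k ≤ y ∧ y ≤ b k)).card with hm
    constructor
    · intro h
      by_contra hc'
      push_neg at hc'
      have h' : 1 + m ≤ r := by omega
      have h'' : ((1 + m : ℕ) : ℝ) ≤ (r : ℝ) := by exact_mod_cast h'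
      linarith [hxlt]
    · intro h
      have h' : r + 1 ≤ 1 + m := by omega
      have h'' : ((r : ℝ)) + 1 ≤ ((1 + m : ℕ) : ℝ) := by
        push_cast
        exact_mod_cast h'
      linarith [hxlt2]
  rw [hsplit]
  -- split the two-sided count into one-sided counts
  have hA := count_le_iff_sorted a y r hr1 hrn
  have hB := count_ge_iff_sorted b y r hr1 hrn
  rw [← hA, ← hB]
  constructor
  · intro h
    constructor
    · refine le_trans h (Finset.card_le_card ?_)
      intro k hk
      simp only [Finset.mem_filter, Finset.mem_univ, true_and] at hk ⊢
      exact hk.1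
    · refine le_trans h (Finset.card_le_card ?_)
      intro k hk
      simp only [Finset.mem_filter, Finset.mem_univ, true_and] at hk ⊢
      exact hk.2
  · rintro ⟨h1, h2⟩
    rcases le_total y (-η / 2) with hy | hy
    · -- y ≤ -η/2 : y ≤ b k always
      have heq : (Finset.univ.filter (fun k : Fin n => a k ≤ y ∧ y ≤ b k))
          = (Finset.univ.filter (fun k : Fin n => a k ≤ y)) := by
        apply Finset.filter_congr
        intro k _
        have : y ≤ b k := by rw [hb k]; have := hs0 k; linarith
        tauto
      rw [heq]; exact h1
    · have heq : (Finset.univ.filter (fun k : Fin n => a k ≤ y ∧ y ≤ b k))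
          = (Finset.univ.filter (fun k : Fin n => y ≤ b k)) := by
        apply Finset.filter_congr
        intro k _
        have : a k ≤ y := by rw [ha k]; have := hs0 k; linarith
        tauto
      rw [heq]; exact h2
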